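/- arXiv:2601.08530 — 2 statements merged into one kernel-verified Lean document; each statement's English description precedes it below -/
import Mathlib

section
/- Let D be a tournament with n = 2^c players, let v* ∈ V(D), and let k = |N_in(v*)| < log₂ n. Let σ be a nice winning seeding for v*, and let T be the labeled spanning binomial arborescence of D rooted at v* whose arcs are exactly the matches played under σ, directed from winner to loser. Then for every vertex b ∈ N_in(v*) there exists a subgraph F of T such that: (i) F is a labeled binomial arborescence of D rooted at some vertex u ∈ {v*} ∪ N_out(v*) and spanning a set X ⊆ V(D) with |X| = 2^k; (ii) if v* ∈ V(F), then u = v*; and (iii) b ∈ V(F). -/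
/-!
Cut the bracket at level `k`.  The players seeded below the level-`k` node containing `b`,
together with the matches played among them, form a binomial arborescence on `2 ^ k` players
rooted at the winner `u` of that sub-bracket.  This `u` survives the first `k` rounds, so it
cannot be an in-neighbour of `v*`: otherwise niceness forces each of those rounds to eliminate
an in-neighbour of `v*`, giving `k + 1` of them.  If `v*` lies in the sub-bracket, it wins it.
-/

open Finset
open scoped Classical

/-- The winner of a single match between `u` and `v`: `u` if `u` beats `v`, else `v`. -/
noncomputable def fight {V : Type*} (beats : V → V → Prop) (u v : V) : V :=
  if beats u v then u else v

/-- The champion of a knockout tournament over `2 ^ c` leaves (addressed by `Fin c → Bool`),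
where `f` assigns a player to each leaf.  Defined by recursion on the depth `c`;
the losers of round `r` are decided by the `r`-th coordinate from the right. -/
noncomputable def champ {V : Type*} (beats : V → V → Prop) :
    (c : ℕ) → ((Fin c → Bool) → V) → V
  | 0, f => f Fin.elim0
  | c + 1, f =>
      fight beats (champ beats c (fun x => f (Fin.cons false x)))
                  (champ beats c (fun x => f (Fin.cons true x)))

/-- The player who, under the seeding `f`, survives the first `r` rounds at the internal
node of the complete binary tree addressed by `y` (the first `c - r` coordinates). -/
noncomputable def subChamp {V : Type*} (beats : V → V → Prop) (c r : ℕ) (h : r ≤ c)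
    (f : (Fin c → Bool) → V) (y : Fin (c - r) → Bool) : V :=
  champ beats r (fun x => f (fun i => Fin.append y x (Fin.cast (Nat.sub_add_cancel h).symm i)))

/-- `remaining beats c f r h` is the set `C_r` of players still remaining after round `r`
of the knockout tournament with seeding `f` (so `C_0` is the set of all players). -/
noncomputable def remaining {V : Type*} (beats : V → V → Prop) (c : ℕ)
    (f : (Fin c → Bool) → V) (r : ℕ) (h : r ≤ c) : Set V :=
  Set.range (subChamp beats c r h f)

/-- Round `r` (`1 ≤ r ≤ c`) is nice under the seeding `f` for the favorite `vstar`: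
either some in-neighbor of `vstar` is eliminated in round `r`
(`|L_r ∩ N_in(v*)| > 0`), or no in-neighbor of `vstar` entered round `r`
(`|C_{r-1} ∩ N_in(v*)| = 0`). -/
noncomputable def NiceRound {V : Type*} (beats : V → V → Prop) (vstar : V) (c : ℕ)
    (f : (Fin c → Bool) → V) (r : ℕ) (h1 : 1 ≤ r) (h : r ≤ c) : Prop :=
  (((remaining beats c f (r - 1) (le_trans (Nat.sub_le r 1) h) \ remaining beats c f r h) ∩
      {u | beats u vstar}).Nonempty) ∨
    (remaining beats c f (r - 1) (le_trans (Nat.sub_le r 1) h) ∩ {u | beats u vstar}) = ∅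

/-- A seeding is nice if all rounds are nice. -/
noncomputable def NiceSeeding {V : Type*} (beats : V → V → Prop) (vstar : V) (c : ℕ)
    (f : (Fin c → Bool) → V) : Prop :=
  ∀ (r : ℕ) (h1 : 1 ≤ r) (h : r ≤ c), NiceRound beats vstar c f r h1 h

/-- `IsBinArb X E r` : the directed graph with vertex set `X` and arc set `E` is a
(labeled copy of an) unlabeled binomial arborescence rooted at `r`. -/
inductive IsBinArb {V : Type*} : Finset V → Finset (V × V) → V → Prop
  | single (v : V) : IsBinArb {v} ∅ v
  | join {X Y : Finset V} {E F : Finset (V × V)} {u v : V} :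
      IsBinArb X E u → IsBinArb Y F v → Disjoint X Y → X.card = Y.card →
      IsBinArb (X ∪ Y) (insert (u, v) (E ∪ F)) u

/-- The match played in round `r` (`1 ≤ r ≤ c`) at the internal node addressed by `y`,
as a pair (winner, loser): it is played between the two players surviving the first
`r - 1` rounds at the two children of this node. -/
noncomputable def matchArc {V : Type*} (beats : V → V → Prop) (c : ℕ)
    (f : (Fin c → Bool) → V) (r : ℕ) (h1 : 1 ≤ r) (h : r ≤ c)
    (y : Fin (c - r) → Bool) : V × V :=
  let hr : r - 1 ≤ c := le_trans (Nat.sub_le r 1) h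
  let hcast : c - (r - 1) = (c - r) + 1 := by omega
  let u := subChamp beats c (r - 1) hr f ((Fin.snoc y false) ∘ (Fin.cast hcast))
  let w := subChamp beats c (r - 1) hr f ((Fin.snoc y true) ∘ (Fin.cast hcast))
  if beats u w then (u, w) else (w, u)

section Knockout

variable {V : Type*} (beats : V → V → Prop)

theorem fight_eq_or (u v : V) : fight beats u v = u ∨ fight beats u v = v := by
  unfold fight
  split <;> simp

theorem exists_champ_eq : ∀ (m : ℕ) (g : (Fin m → Bool) → V), ∃ x, g x = champ beats m g
  | 0, _ => ⟨Fin.elim0, rfl⟩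
  | m + 1, g => by
    rcases fight_eq_or beats (champ beats m fun x => g (Fin.cons false x))
      (champ beats m fun x => g (Fin.cons true x)) with h | h <;> rw [champ, h]
    · obtain ⟨x, hx⟩ := exists_champ_eq m fun x => g (Fin.cons false x)
      exact ⟨_, hx⟩
    · obtain ⟨x, hx⟩ := exists_champ_eq m fun x => g (Fin.cons true x)
      exact ⟨_, hx⟩

/-- A leaf address is the address `y` of its ancestor at level `m` followed by the path `x`
from that ancestor down to the leaf. -/
def leafEquiv {c m : ℕ} (hm : m ≤ c) :
    (Fin (c - m) → Bool) × (Fin m → Bool) ≃ (Fin c → Bool) :=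
  (Fin.appendEquiv _ _).trans (Equiv.piCongrLeft' _ (finCongr (Nat.sub_add_cancel hm)))

theorem subChamp_eq_champ {c m : ℕ} (hm : m ≤ c) (f : (Fin c → Bool) → V)
    (y : Fin (c - m) → Bool) :
    subChamp beats c m hm f y = champ beats m fun x => f (leafEquiv hm (y, x)) := rfl

theorem leafEquiv_self {c : ℕ} (y : Fin (c - c) → Bool) (x : Fin c → Bool) :
    leafEquiv le_rfl (y, x) = x := by
  funext i
  have hi : Fin.cast (Nat.sub_add_cancel le_rfl).symm i = Fin.natAdd (c - c) i := by
    ext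
    simp
  simp only [leafEquiv, Equiv.trans_apply, Equiv.piCongrLeft'_apply, finCongr_symm,
    finCongr_apply, Fin.appendEquiv_apply, hi, Fin.append_right]

theorem leafEquiv_snoc {c m : ℕ} (hm : m + 1 ≤ c) (hc : c - m = c - (m + 1) + 1)
    (y : Fin (c - (m + 1)) → Bool) (b : Bool) (x : Fin m → Bool) :
    leafEquiv (Nat.le_of_succ_le hm) (Fin.snoc y b ∘ Fin.cast hc, x) =
      leafEquiv hm (y, Fin.cons b x) := by
  funext i
  simp only [leafEquiv, Equiv.trans_apply, Equiv.piCongrLeft'_apply, finCongr_symm,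
    finCongr_apply, Fin.appendEquiv_apply, Fin.append_cast_left, Function.comp_apply]
  rw [← Fin.append_right_eq_snoc y (fun _ : Fin 1 => b), Fin.append_assoc, Function.comp_apply,
    Fin.append_left_eq_cons, Fin.append_cast_right, Function.comp_apply]
  congr 1

theorem subChamp_succ {c m : ℕ} (hm : m + 1 ≤ c) (hc : c - m = c - (m + 1) + 1)
    (f : (Fin c → Bool) → V) (y : Fin (c - (m + 1)) → Bool) :
    subChamp beats c (m + 1) hm f y =
      fight beats
        (subChamp beats c m (Nat.le_of_succ_le hm) f (Fin.snoc y false ∘ Fin.cast hc))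
        (subChamp beats c m (Nat.le_of_succ_le hm) f (Fin.snoc y true ∘ Fin.cast hc)) := by
  rw [subChamp_eq_champ, champ]
  simp only [subChamp_eq_champ, leafEquiv_snoc hm hc]

noncomputable def playersBelow {c m : ℕ} (f : (Fin c → Bool) → V) (hm : m ≤ c)
    (y : Fin (c - m) → Bool) : Finset V :=
  univ.image fun x => f (leafEquiv hm (y, x))

section playersBelow

variable {c m : ℕ} {f : (Fin c → Bool) → V}

theorem subChamp_mem_playersBelow (hm : m ≤ c) (y : Fin (c - m) → Bool) :
    subChamp beats c m hm f y ∈ playersBelow f hm y := by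
  obtain ⟨x, hx⟩ := exists_champ_eq beats m fun x => f (leafEquiv hm (y, x))
  exact mem_image.2 ⟨x, mem_univ x, hx⟩

theorem card_playersBelow (hf : Function.Injective f) (hm : m ≤ c) (y : Fin (c - m) → Bool) :
    #(playersBelow f hm y) = 2 ^ m := by
  have hinj : Function.Injective fun x => f (leafEquiv hm (y, x)) :=
    fun _ _ h => Prod.mk_right_injective y ((leafEquiv hm).injective (hf h))
  rw [playersBelow, card_image_of_injective _ hinj]
  simp

theorem eq_of_mem_playersBelow (hf : Function.Injective f) (hm : m ≤ c)
    {y₁ y₂ : Fin (c - m) → Bool} {v : V}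
    (h₁ : v ∈ playersBelow f hm y₁) (h₂ : v ∈ playersBelow f hm y₂) : y₁ = y₂ := by
  obtain ⟨x₁, -, rfl⟩ := mem_image.1 h₁
  obtain ⟨x₂, -, hx⟩ := mem_image.1 h₂
  exact (Prod.ext_iff.1 ((leafEquiv hm).injective (hf hx))).1.symm

theorem playersBelow_succ (hm : m + 1 ≤ c) (hc : c - m = c - (m + 1) + 1)
    (y : Fin (c - (m + 1)) → Bool) :
    playersBelow f hm y =
      playersBelow f (Nat.le_of_succ_le hm) (Fin.snoc y false ∘ Fin.cast hc) ∪
        playersBelow f (Nat.le_of_succ_le hm) (Fin.snoc y true ∘ Fin.cast hc) := by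
  ext v
  simp only [playersBelow, mem_union, mem_image, mem_univ, true_and, leafEquiv_snoc hm hc,
    Fin.exists_fin_succ_pi, Bool.exists_bool]

theorem disjoint_playersBelow_snoc (hf : Function.Injective f) (hm : m + 1 ≤ c)
    (hc : c - m = c - (m + 1) + 1) (y : Fin (c - (m + 1)) → Bool) :
    Disjoint (playersBelow f (Nat.le_of_succ_le hm) (Fin.snoc y false ∘ Fin.cast hc))
      (playersBelow f (Nat.le_of_succ_le hm) (Fin.snoc y true ∘ Fin.cast hc)) := by
  refine disjoint_left.2 fun v h₀ h₁ => ?_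
  simpa using congrFun (eq_of_mem_playersBelow hf _ h₀ h₁) (Fin.cast hc.symm (Fin.last _))

end playersBelow

noncomputable def playedArc (u w : V) : V × V :=
  if beats u w then (u, w) else (w, u)

theorem matchArc_succ {c m : ℕ} (hm : m + 1 ≤ c) (f : (Fin c → Bool) → V)
    (y : Fin (c - (m + 1)) → Bool) (hc : c - m = c - (m + 1) + 1) :
    matchArc beats c f (m + 1) (Nat.le_add_left 1 m) hm y =
      playedArc beats
        (subChamp beats c m (Nat.le_of_succ_le hm) f (Fin.snoc y false ∘ Fin.cast hc))
        (subChamp beats c m (Nat.le_of_succ_le hm) f (Fin.snoc y true ∘ Fin.cast hc)) :=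
  rfl

theorem playedArc_beats (htot : ∀ u v : V, u ≠ v → (beats u v ↔ ¬ beats v u)) {u w : V}
    (hne : u ≠ w) : beats (playedArc beats u w).1 (playedArc beats u w).2 := by
  unfold playedArc
  split_ifs with h
  · exact h
  · exact (htot w u hne.symm).2 h

theorem IsBinArb.join_playedArc {X Y : Finset V} {E F : Finset (V × V)} {u w : V}
    (hX : IsBinArb X E u) (hY : IsBinArb Y F w) (hd : Disjoint X Y) (hc : #X = #Y) :
    IsBinArb (X ∪ Y) (insert (playedArc beats u w) (E ∪ F)) (fight beats u w) := by
  unfold playedArc fight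
  split
  · exact hX.join hY hd hc
  · rw [union_comm X, union_comm E]
    exact hY.join hX hd.symm hc.symm

theorem exists_isBinArb_playersBelow (htot : ∀ u v : V, u ≠ v → (beats u v ↔ ¬ beats v u))
    {c : ℕ} {f : (Fin c → Bool) → V} (hf : Function.Injective f) {ET : Finset (V × V)}
    (hET : ∀ r (h1 : 1 ≤ r) (h : r ≤ c) y, matchArc beats c f r h1 h y ∈ ET) :
    ∀ (m : ℕ) (hm : m ≤ c) (y : Fin (c - m) → Bool), ∃ E : Finset (V × V),
      E ⊆ ET ∧ IsBinArb (playersBelow f hm y) E (subChamp beats c m hm f y) ∧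
        ∀ p ∈ E, beats p.1 p.2
  | 0, hm, y => by
    refine ⟨∅, empty_subset _, ?_, by simp⟩
    rw [playersBelow, univ_unique, image_singleton]
    exact IsBinArb.single _
  | m + 1, hm, y => by
    have hc : c - m = c - (m + 1) + 1 := by omega
    obtain ⟨E₀, hE₀, harb₀, hbeats₀⟩ :=
      exists_isBinArb_playersBelow htot hf hET m (by omega) (Fin.snoc y false ∘ Fin.cast hc)
    obtain ⟨E₁, hE₁, harb₁, hbeats₁⟩ :=
      exists_isBinArb_playersBelow htot hf hET m (by omega) (Fin.snoc y true ∘ Fin.cast hc)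
    have hdisj := disjoint_playersBelow_snoc hf hm hc y
    have hne := hdisj.forall_ne_finset (subChamp_mem_playersBelow beats _ _)
      (subChamp_mem_playersBelow beats _ _)
    refine ⟨insert (matchArc beats c f (m + 1) (Nat.le_add_left 1 m) hm y) (E₀ ∪ E₁),
      insert_subset (hET _ _ _ _) (union_subset hE₀ hE₁), ?_, ?_⟩
    · rw [playersBelow_succ hm hc, subChamp_succ beats hm hc, matchArc_succ beats hm f y hc]
      exact harb₀.join_playedArc beats harb₁ hdisj
        (by rw [card_playersBelow hf, card_playersBelow hf])
    · simp only [forall_mem_insert, mem_union, matchArc_succ beats hm f y hc]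
      exact ⟨playedArc_beats beats htot hne, fun p hp => hp.elim (hbeats₀ p) (hbeats₁ p)⟩

section remaining

variable {c : ℕ} (f : (Fin c → Bool) → V)

theorem remaining_succ_subset {r : ℕ} (h : r + 1 ≤ c) :
    remaining beats c f (r + 1) h ⊆ remaining beats c f r (Nat.le_of_succ_le h) := by
  rintro v ⟨y, rfl⟩
  rw [subChamp_succ beats h (by omega)]
  rcases fight_eq_or beats _ _ with h | h <;> rw [h] <;> exact ⟨_, rfl⟩

theorem remaining_anti {r₁ r₂ : ℕ} (h₁₂ : r₁ ≤ r₂) (h₁ : r₁ ≤ c) (h₂ : r₂ ≤ c) :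
    remaining beats c f r₂ h₂ ⊆ remaining beats c f r₁ h₁ := by
  induction r₂, h₁₂ using Nat.le_induction with
  | base => rfl
  | succ r _ ih => exact (remaining_succ_subset beats f h₂).trans (ih _)

theorem champ_mem_remaining {r : ℕ} (h : r ≤ c) : champ beats c f ∈ remaining beats c f r h :=
  remaining_anti beats f h h le_rfl
    ⟨fun _ => false, by simp only [subChamp_eq_champ, leafEquiv_self]⟩

variable [Fintype V] {vstar : V}

theorem le_card_inNbrs_not_mem_remaining (hnice : NiceSeeding beats vstar c f) :
    ∀ (r : ℕ) (h : r ≤ c), (∃ w ∈ remaining beats c f r h, beats w vstar) →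
      r ≤ #{u | beats u vstar ∧ u ∉ remaining beats c f r h}
  | 0, _, _ => Nat.zero_le _
  | r + 1, h, ⟨w, hw, hwb⟩ => by
    have hw' := remaining_succ_subset beats f h hw
    have ih := le_card_inNbrs_not_mem_remaining hnice r (by omega) ⟨w, hw', hwb⟩
    obtain ⟨e, ⟨he_mem, he_notMem⟩, heb⟩ := (hnice (r + 1) (by omega) h).resolve_right
      (Set.nonempty_iff_ne_empty.1 ⟨w, hw', hwb⟩)
    have hlt : ({u | beats u vstar ∧ u ∉ remaining beats c f r (by omega)} : Finset V) ⊂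
        ({u | beats u vstar ∧ u ∉ remaining beats c f (r + 1) h} : Finset V) := by
      refine (ssubset_iff_of_subset fun u hu => ?_).2
        ⟨e, mem_filter.2 ⟨mem_univ e, heb, he_notMem⟩,
          fun hS => (mem_filter.1 hS).2.2 he_mem⟩
      simp only [mem_filter, mem_univ, true_and] at hu ⊢
      exact ⟨hu.1, fun hu' => hu.2 (remaining_succ_subset beats f h hu')⟩
    have := card_lt_card hlt
    omega

theorem not_beats_of_mem_remaining {k : ℕ} (hk : k = #{u | beats u vstar}) (hkc : k ≤ c)
    (hnice : NiceSeeding beats vstar c f) {w : V} (hw : w ∈ remaining beats c f k hkc) :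
    ¬ beats w vstar := by
  intro hwb
  have hle := le_card_inNbrs_not_mem_remaining beats f hnice k hkc ⟨w, hw, hwb⟩
  have hlt : #{u | beats u vstar ∧ u ∉ remaining beats c f k hkc} < #{u | beats u vstar} :=
    card_lt_card <| (ssubset_iff_of_subset fun u hu =>
      mem_filter.2 ⟨mem_univ u, (mem_filter.1 hu).2.1⟩).2 ⟨w, mem_filter.2 ⟨mem_univ w, hwb⟩,
        fun h => (mem_filter.1 h).2.2 hw⟩
  omega

end remaining

end Knockout

theorem stmt7_general {V : Type*} [Fintype V] (beats : V → V → Prop)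
    (htot : ∀ u v : V, u ≠ v → (beats u v ↔ ¬ beats v u))
    (c : ℕ) (vstar : V)
    (k : ℕ) (hk : k = (Finset.univ.filter (fun u => beats u vstar)).card)
    (hkc : k < c)
    (f : (Fin c → Bool) → V) (hbij : Function.Bijective f)
    (hwin : champ beats c f = vstar)
    (hnice : NiceSeeding beats vstar c f)
    (ET : Finset (V × V))
    (hTmatch : ∀ p : V × V,
      p ∈ ET ↔ ∃ (r : ℕ) (h1 : 1 ≤ r) (h : r ≤ c) (y : Fin (c - r) → Bool),
        matchArc beats c f r h1 h y = p) :
    ∀ b : V, beats b vstar →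
      ∃ (X : Finset V) (E : Finset (V × V)) (u : V),
        E ⊆ ET ∧
        IsBinArb X E u ∧
        (∀ p ∈ E, beats p.1 p.2) ∧
        X.card = 2 ^ k ∧
        (u = vstar ∨ beats vstar u) ∧
        (vstar ∈ X → u = vstar) ∧
        b ∈ X := by
  intro b _
  obtain ⟨z, rfl⟩ := hbij.2 b
  obtain ⟨⟨y, x⟩, rfl⟩ := (leafEquiv hkc.le).surjective z
  obtain ⟨E, hET, harb, hbeats⟩ := exists_isBinArb_playersBelow beats htot hbij.1
    (fun r h1 h y => (hTmatch _).2 ⟨r, h1, h, y, rfl⟩) k hkc.le y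
  have hu : ¬ beats (subChamp beats c k hkc.le f y) vstar :=
    not_beats_of_mem_remaining beats f hk hkc.le hnice ⟨y, rfl⟩
  refine ⟨_, E, _, hET, harb, hbeats, card_playersBelow hbij.1 _ y, ?_, fun hv => ?_,
    mem_image_of_mem _ (mem_univ x)⟩
  · exact (eq_or_ne _ vstar).imp_right fun hne => (htot vstar _ hne.symm).2 hu
  · obtain ⟨y', hy'⟩ := hwin ▸ champ_mem_remaining beats f hkc.le
    have hv' := hy' ▸ subChamp_mem_playersBelow beats hkc.le y'
    rw [← eq_of_mem_playersBelow hbij.1 hkc.le hv' hv, hy']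

/-- let `k = |N_in(vstar)| < log₂ n`, let `f` be a nice winning seeding for
`vstar`, and let `T` (with arc set `ET`) be the labeled spanning binomial arborescence of
the tournament rooted at `vstar` whose arcs are exactly the matches played under `f`,
directed from winner to loser.  Then for every in-neighbor `b` of `vstar` there is a
subgraph `F` of `T` (vertex set `X`, arc set `E ⊆ ET`) such that:
(i) `F` is a labeled binomial arborescence of the tournament, rooted at some
`u ∈ {vstar} ∪ N_out(vstar)` and spanning a set `X` with `|X| = 2 ^ k`;
(ii) if `vstar ∈ X` then `u = vstar`; and (iii) `b ∈ X`. -/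
theorem stmt7 {V : Type*} [Fintype V] (beats : V → V → Prop)
    (hirr : ∀ v, ¬ beats v v)
    (htot : ∀ u v : V, u ≠ v → (beats u v ↔ ¬ beats v u))
    (c : ℕ) (hcard : Fintype.card V = 2 ^ c) (vstar : V)
    (k : ℕ) (hk : k = (Finset.univ.filter (fun u => beats u vstar)).card)
    (hkc : k < c)
    (f : (Fin c → Bool) → V) (hbij : Function.Bijective f)
    (hwin : champ beats c f = vstar)
    (hnice : NiceSeeding beats vstar c f)
    (ET : Finset (V × V))
    (hTarb : IsBinArb Finset.univ ET vstar)
    (hTmatch : ∀ p : V × V,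
      p ∈ ET ↔ ∃ (r : ℕ) (h1 : 1 ≤ r) (h : r ≤ c) (y : Fin (c - r) → Bool),
        matchArc beats c f r h1 h y = p) :
    ∀ b : V, beats b vstar →
      ∃ (X : Finset V) (E : Finset (V × V)) (u : V),
        E ⊆ ET ∧
        IsBinArb X E u ∧
        (∀ p ∈ E, beats p.1 p.2) ∧
        X.card = 2 ^ k ∧
        (u = vstar ∨ beats vstar u) ∧
        (vstar ∈ X → u = vstar) ∧
        b ∈ X :=
  stmt7_general beats htot c vstar k hk hkc f hbij hwin hnice ET hTmatch
end

section
/- Let D be a tournament with n players and v* ∈ V(D), let k = |N_in(v*)| with k · 2^k < n, and let c : V(D) → [k·2^k] be a vertex-coloring of D such that all vertices in N_in(v*) are assigned pairwise distinct colors that are different from the colors of all other vertices of D. Let F' be the digraph consisting of k pairwise vertex-disjoint unlabeled binomial arborescences T_1, …, T_k, each with 2^k vertices and rooted at r_1, …, r_k respectively, together with a new vertex f and the arcs (f, r_i) for all i ∈ [k]. Let D' be the digraph obtained from D by removing all arcs (b, v*) with b ∈ N_in(v*), adding a new vertex d, and adding the arcs (d, v) for all v ∈ N_out(v*) ∪ {v*}.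 Let c' : V(D') → [k·2^k + 1] extend c by setting c'(d) = k·2^k + 1. Then there exists a winning-witness forest of (D, v*) whose vertices receive pairwise distinct colors under c if and only if D' contains a subgraph H', all of whose vertices receive pairwise distinct colors under c', that is isomorphic to F' via an isomorphism mapping f to d. -/
open Finset
open scoped Classical

/-- `IsWWF beats vstar k X E u` : the family of `k` digraphs with vertex sets `X i`,
arc sets `E i` and roots `u i` forms a winning-witness forest of `(D, vstar)`:
`k` pairwise vertex-disjoint labeled binomial arborescences of the tournament, each
spanning exactly `2 ^ k` vertices, each rooted in `N_out(vstar) ∪ {vstar}`, jointly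
containing all of `N_in(vstar)`, and such that if `vstar` occurs at all then it is the
root of exactly one of the arborescences. -/
def IsWWF {V : Type*} (beats : V → V → Prop) (vstar : V) (k : ℕ)
    (X : Fin k → Finset V) (E : Fin k → Finset (V × V)) (u : Fin k → V) : Prop :=
  (∀ i, IsBinArb (X i) (E i) (u i)) ∧
  (∀ i, ∀ p ∈ E i, beats p.1 p.2) ∧
  (∀ i, (X i).card = 2 ^ k) ∧
  (∀ i j, i ≠ j → Disjoint (X i) (X j)) ∧
  (∀ i, u i = vstar ∨ beats vstar (u i)) ∧
  (∀ b, beats b vstar → ∃ i, b ∈ X i) ∧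
  ((∃ i, vstar ∈ X i) → ∃! i, u i = vstar)

/-- The digraph `D'`: obtained from the tournament by removing all arcs `(b, vstar)` with
`b ∈ N_in(vstar)`, adding a new vertex `d` (modeled by `none`), and adding the arcs
`(d, v)` for all `v ∈ N_out(vstar) ∪ {vstar}`. -/
def beatsD' {V : Type*} (beats : V → V → Prop) (vstar : V) (a b : Option V) : Prop :=
  match a, b with
  | none, some v => v = vstar ∨ beats vstar v
  | some u, some v => beats u v ∧ ¬(v = vstar ∧ beats u vstar)
  | _, none => False

/-- The digraph `F'`: `k` pairwise vertex-disjoint unlabeled binomial arborescences, each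
with `2 ^ k` vertices, together with a new root `f` (modeled by `none`) joined to the `k`
roots.  The `i`-th arborescence lives on `{i} × Fin (2 ^ k)`, with root `(i, 0)` and the
parent of a node `m ≠ 0` obtained by clearing the lowest binary bit of `m` (this is the
standard binomial tree on `2 ^ k` nodes). -/
def arcF' (k : ℕ) (a b : Option (Fin k × Fin (2 ^ k))) : Prop :=
  match a, b with
  | none, some p => (p.2 : ℕ) = 0
  | some p, some p' =>
      p.1 = p'.1 ∧ (p'.2 : ℕ) ≠ 0 ∧ (p.2 : ℕ) = (p'.2 : ℕ) - 2 ^ (padicValNat 2 (p'.2 : ℕ))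
  | _, none => False

/-- The coloring `c'` of `D'` extending `c` by giving the new vertex `d` the new color
`k * 2 ^ k + 1` (here: `Fin.last`). -/
def colD' {V : Type*} (k : ℕ) (c : V → Fin (k * 2 ^ k)) (a : Option V) :
    Fin (k * 2 ^ k + 1) :=
  match a with
  | some v => Fin.castSucc (c v)
  | none => Fin.last (k * 2 ^ k)

/-!
Every binomial arborescence on `2 ^ n` vertices is an injective image of the standard one on
`{0, …, 2 ^ n - 1}`, in which the parent of `m ≠ 0` is `m` with its lowest binary bit cleared.
Hence a colourful winning-witness forest and a colourful copy of `F'` in `D'` sending `f` to `d`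
are the same data: the arcs leaving `d` encode the condition on the roots, and the missing arcs
into `v*` keep `v*` from being a non-root vertex. What the forest must additionally do, contain
`N_in(v*)`, comes for free: the copy has `k * 2 ^ k` vertices of distinct colours, so it uses
every colour, and the colour of an in-neighbour of `v*` belongs to that vertex alone.
-/

def binomialParent (m : ℕ) : ℕ := m - 2 ^ padicValNat 2 m

def binomialArcs (n : ℕ) : Finset (ℕ × ℕ) :=
  ((range (2 ^ n)).filter (· ≠ 0)).image fun m => (binomialParent m, m)

lemma padicValNat_two_pow_add {m n : ℕ} (hm : m ≠ 0) (h : m < 2 ^ n) :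
    padicValNat 2 (2 ^ n + m) = padicValNat 2 m := by
  have hlt : padicValNat 2 m < n :=
    (Nat.pow_lt_pow_iff_right (by norm_num)).1
      ((Nat.le_of_dvd (Nat.pos_of_ne_zero hm) pow_padicValNat_dvd).trans_lt h)
  have key : ∀ j ≤ n, j ≤ padicValNat 2 (2 ^ n + m) ↔ j ≤ padicValNat 2 m := fun j hj => by
    rw [← padicValNat_dvd_iff_le_of_ne_one (by norm_num) (by positivity),
      ← padicValNat_dvd_iff_le_of_ne_one (by norm_num) hm,
      Nat.dvd_add_right (pow_dvd_pow 2 hj)]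
  have := key _ hlt
  have := key _ hlt.le
  omega

lemma binomialParent_two_pow (n : ℕ) : binomialParent (2 ^ n) = 0 := by
  simp [binomialParent]

lemma binomialParent_two_pow_add {m n : ℕ} (hm : m ≠ 0) (h : m < 2 ^ n) :
    binomialParent (2 ^ n + m) = 2 ^ n + binomialParent m := by
  have := Nat.le_of_dvd (Nat.pos_of_ne_zero hm) (pow_padicValNat_dvd (p := 2) (n := m))
  rw [binomialParent, binomialParent, padicValNat_two_pow_add hm h]
  omega

lemma mem_binomialArcs {n : ℕ} {a : ℕ × ℕ} :
    a ∈ binomialArcs n ↔ a.2 ≠ 0 ∧ a.2 < 2 ^ n ∧ a.1 = binomialParent a.2 := by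
  obtain ⟨a, b⟩ := a
  simp only [binomialArcs, mem_image, mem_filter, mem_range, Prod.mk.injEq]
  constructor
  · rintro ⟨m, ⟨hm, hm0⟩, rfl, rfl⟩
    exact ⟨hm0, hm, rfl⟩
  · rintro ⟨hb0, hb, rfl⟩
    exact ⟨b, ⟨hb, hb0⟩, rfl, rfl⟩

lemma lt_of_mem_binomialArcs {n : ℕ} {a : ℕ × ℕ} (ha : a ∈ binomialArcs n) :
    a.1 < 2 ^ n ∧ a.2 < 2 ^ n := by
  obtain ⟨-, hlt, h⟩ := mem_binomialArcs.1 ha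
  exact ⟨h ▸ (Nat.sub_le _ _).trans_lt hlt, hlt⟩

lemma range_two_pow_succ (n : ℕ) :
    range (2 ^ (n + 1)) = range (2 ^ n) ∪ (range (2 ^ n)).image (2 ^ n + ·) := by
  rw [pow_succ, mul_two, range_add, map_eq_image]
  rfl

lemma binomialArcs_succ (n : ℕ) :
    binomialArcs (n + 1) = insert (0, 2 ^ n)
      (binomialArcs n ∪ (binomialArcs n).image (Prod.map (2 ^ n + ·) (2 ^ n + ·))) := by
  ext ⟨a, b⟩
  simp only [mem_insert, mem_union, mem_image, mem_binomialArcs, Prod.mk.injEq, Prod.exists,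
    Prod.map_apply, pow_succ, mul_two]
  constructor
  · rintro ⟨hb0, hb, rfl⟩
    rcases lt_trichotomy b (2 ^ n) with hlt | rfl | hgt
    · exact .inr (.inl ⟨hb0, hlt, rfl⟩)
    · exact .inl ⟨binomialParent_two_pow n, rfl⟩
    · obtain ⟨c, rfl⟩ := Nat.exists_eq_add_of_lt hgt
      refine .inr (.inr ⟨_, c + 1, ⟨c.succ_ne_zero, by omega, rfl⟩, ?_, by omega⟩)
      rw [← binomialParent_two_pow_add c.succ_ne_zero (by omega), add_assoc]
  · rintro (⟨rfl, rfl⟩ | ⟨hb0, hb, rfl⟩ | ⟨x, y, ⟨hy0, hy, rfl⟩, rfl, rfl⟩)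
    · exact ⟨by positivity, by simp, (binomialParent_two_pow n).symm⟩
    · exact ⟨hb0, by omega, rfl⟩
    · exact ⟨by omega, by omega, (binomialParent_two_pow_add hy0 hy).symm⟩

namespace IsBinArb

variable {V W : Type*} {X : Finset V} {E : Finset (V × V)} {r : V}

lemma root_mem (h : IsBinArb X E r) : r ∈ X := by
  induction h with
  | single v => exact mem_singleton_self v
  | join _ _ _ _ ih _ => exact mem_union_left _ ih

lemma image (h : IsBinArb X E r) {f : V → W} (hf : Set.InjOn f X) :
    IsBinArb (X.image f) (E.image (Prod.map f f)) (f r) := by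
  induction h with
  | single v => simpa using single (f v)
  | @join X Y E F u v _ _ hd hc ih₁ ih₂ =>
    rw [coe_union] at hf
    rw [image_union, image_insert, image_union]
    refine join (ih₁ (hf.mono Set.subset_union_left)) (ih₂ (hf.mono Set.subset_union_right))
      ?_ ?_
    · rw [disjoint_left]
      simp only [mem_image]
      rintro _ ⟨x, hx, rfl⟩ ⟨y, hy, hxy⟩
      exact disjoint_left.1 hd hx
        (hf (Set.mem_union_right _ hy) (Set.mem_union_left _ hx) hxy ▸ hy)
    · rw [card_image_of_injOn (hf.mono Set.subset_union_left),
        card_image_of_injOn (hf.mono Set.subset_union_right), hc]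

end IsBinArb

lemma isBinArb_binomial (n : ℕ) : IsBinArb (range (2 ^ n)) (binomialArcs n) 0 := by
  induction n with
  | zero => simpa [binomialArcs, filter_singleton] using IsBinArb.single 0
  | succ n ih =>
    rw [range_two_pow_succ, binomialArcs_succ]
    have hshift := ih.image (add_right_injective (2 ^ n)).injOn
    rw [add_zero] at hshift
    convert ih.join hshift ?_ ?_
    · simp only [disjoint_left, mem_range, mem_image]
      omega
    · convert (card_image_of_injective (range (2 ^ n)) (add_right_injective (2 ^ n))).symm

namespace IsBinArb

variable {V : Type*} {X : Finset V} {E : Finset (V × V)} {r : V}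

theorem exists_eq_image_binomial (h : IsBinArb X E r) :
    ∃ n, ∃ g : ℕ → V, X.card = 2 ^ n ∧ X = (range (2 ^ n)).image g ∧
      E = (binomialArcs n).image (Prod.map g g) ∧ r = g 0 := by
  induction h with
  | single v =>
    exact ⟨0, fun _ => v, by simp, by simp, by simp [binomialArcs, filter_singleton], rfl⟩
  | join _ _ hd hc ih₁ ih₂ =>
    obtain ⟨n, g₁, hX, rfl, rfl, rfl⟩ := ih₁
    obtain ⟨m, g₂, hY, rfl, rfl, rfl⟩ := ih₂
    obtain rfl : n = m := Nat.pow_right_injective le_rfl (hX.symm.trans (hc.trans hY))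
    set g : ℕ → V := fun a => if a < 2 ^ n then g₁ a else g₂ (a - 2 ^ n)
    have hg₁ : ∀ a < 2 ^ n, g a = g₁ a := fun a ha => if_pos ha
    have hg₂ : g ∘ (2 ^ n + ·) = g₂ := funext fun a => by
      simp only [g, Function.comp_apply, if_neg (Nat.not_lt.2 (Nat.le_add_right _ a)),
        Nat.add_sub_cancel_left]
    have hcongr₁ :
        (binomialArcs n).image (Prod.map g g) = (binomialArcs n).image (Prod.map g₁ g₁) :=
      image_congr fun a ha => by
        obtain ⟨h₁, h₂⟩ := lt_of_mem_binomialArcs ha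
        exact Prod.ext (hg₁ _ h₁) (hg₁ _ h₂)
    refine ⟨n + 1, g, ?_, ?_, ?_, (hg₁ 0 (Nat.two_pow_pos n)).symm⟩
    · rw [card_union_of_disjoint hd, hX, ← hc, hX, pow_succ, mul_two]
    · rw [range_two_pow_succ, image_union, image_image, hg₂,
        image_congr fun a ha => hg₁ a (mem_range.1 ha)]
    · rw [binomialArcs_succ, image_insert, image_union, image_image, Prod.map_comp_map, hg₂,
        hcongr₁, Prod.map_apply, hg₁ 0 (Nat.two_pow_pos n), ← congrFun hg₂ 0]
      rfl

theorem exists_eq_image_binomial_of_card {n : ℕ} (h : IsBinArb X E r) (hX : X.card = 2 ^ n) :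
    ∃ g : ℕ → V, Set.InjOn g (range (2 ^ n)) ∧ X = (range (2 ^ n)).image g ∧
      E = (binomialArcs n).image (Prod.map g g) ∧ r = g 0 := by
  obtain ⟨m, g, hm, rfl, rfl, rfl⟩ := h.exists_eq_image_binomial
  obtain rfl : m = n := Nat.pow_right_injective le_rfl (hm.symm.trans hX)
  exact ⟨g, injOn_of_card_image_eq (hm.trans (card_range _).symm), rfl, rfl, rfl⟩

end IsBinArb

section ColorfulCopy

variable {V C : Type*} {beats : V → V → Prop} {vstar : V} {col : V → C} {k : ℕ}

/-- `G i` labels the `i`-th binomial tree of `F'` by `{0, …, 2 ^ k - 1}` as in `binomialArcs k`;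
a colourful copy of `F'` in `D'` sends `f` to `d`. -/
def IsColorfulCopy (beats : V → V → Prop) (vstar : V) (col : V → C) (k : ℕ)
    (G : Fin k → ℕ → V) : Prop :=
  Function.Injective (col ∘ fun p : Fin k × Fin (2 ^ k) => G p.1 p.2) ∧
  ∀ i, beatsD' beats vstar none (some (G i 0)) ∧
    ∀ a ∈ binomialArcs k, beatsD' beats vstar (some (G i a.1)) (some (G i a.2))

namespace IsColorfulCopy

variable {G : Fin k → ℕ → V}

lemma eq_of_col_eq (h : IsColorfulCopy beats vstar col k G) {i j : Fin k} {m m' : ℕ}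
    (hm : m < 2 ^ k) (hm' : m' < 2 ^ k) (he : col (G i m) = col (G j m')) : i = j ∧ m = m' := by
  simpa [Prod.ext_iff, Fin.ext_iff] using h.1 (a₁ := (i, ⟨m, hm⟩)) (a₂ := (j, ⟨m', hm'⟩)) he

lemma injOn (h : IsColorfulCopy beats vstar col k G) (i : Fin k) :
    Set.InjOn (G i) (range (2 ^ k)) := fun _ hm _ hm' he =>
  (h.eq_of_col_eq (mem_range.1 hm) (mem_range.1 hm') (congrArg col he)).2

lemma injOn_col (h : IsColorfulCopy beats vstar col k G) :
    Set.InjOn col (⋃ i, ↑((range (2 ^ k)).image (G i))) := by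
  simp only [Set.InjOn, Set.mem_iUnion, coe_image, coe_range, Set.mem_image, Set.mem_Iio]
  rintro _ ⟨i, m, hm, rfl⟩ _ ⟨j, m', hm', rfl⟩ he
  obtain ⟨rfl, rfl⟩ := h.eq_of_col_eq hm hm' he
  rfl

lemma eq_zero_of_eq_vstar (h : IsColorfulCopy beats vstar col k G) {i : Fin k} {m : ℕ}
    (hm : m < 2 ^ k) (hv : G i m = vstar) : m = 0 := by
  by_contra h0
  obtain ⟨hbeats, hnot⟩ := (h.2 i).2 (binomialParent m, m) (mem_binomialArcs.2 ⟨h0, hm, rfl⟩)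
  exact hnot ⟨hv, hv ▸ hbeats⟩

lemma exists_eq_of_beats [Fintype C] (hC : Fintype.card C ≤ k * 2 ^ k)
    (hNin : Set.InjOn col {u | beats u vstar})
    (hsep : ∀ u, beats u vstar → ∀ v, ¬ beats v vstar → col u ≠ col v)
    (h : IsColorfulCopy beats vstar col k G) {b : V} (hb : beats b vstar) :
    ∃ i, ∃ m < 2 ^ k, G i m = b := by
  have hbij := (Fintype.bijective_iff_injective_and_card _).2
    ⟨h.1, le_antisymm (Fintype.card_le_of_injective _ h.1) (by simpa using hC)⟩
  obtain ⟨⟨i, m⟩, hm⟩ := hbij.2 (col b)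
  have hmv : beats (G i m) vstar := by_contra fun hn => hsep b hb _ hn hm.symm
  exact ⟨i, m, m.2, hNin hmv hb hm⟩

theorem isWWF [Fintype C] (hC : Fintype.card C ≤ k * 2 ^ k)
    (hNin : Set.InjOn col {u | beats u vstar})
    (hsep : ∀ u, beats u vstar → ∀ v, ¬ beats v vstar → col u ≠ col v)
    (h : IsColorfulCopy beats vstar col k G) :
    IsWWF beats vstar k (fun i => (range (2 ^ k)).image (G i))
      (fun i => (binomialArcs k).image (Prod.map (G i) (G i))) (fun i => G i 0) := by
  refine ⟨fun i => (isBinArb_binomial k).image (h.injOn i), ?_,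
    fun i => by rw [card_image_of_injOn (h.injOn i), card_range], ?_, fun i => (h.2 i).1, ?_, ?_⟩
  · intro i p hp
    obtain ⟨a, ha, rfl⟩ := mem_image.1 hp
    exact ((h.2 i).2 a ha).1
  · intro i j hij
    simp only [disjoint_left, mem_image, mem_range]
    rintro _ ⟨m, hm, rfl⟩ ⟨m', hm', he⟩
    exact hij (h.eq_of_col_eq hm hm' (congrArg col he.symm)).1
  · intro b hb
    obtain ⟨i, m, hm, rfl⟩ := h.exists_eq_of_beats hC hNin hsep hb
    exact ⟨i, mem_image_of_mem _ (mem_range.2 hm)⟩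
  · rintro ⟨i, hi⟩
    obtain ⟨m, hm, hv⟩ := mem_image.1 hi
    obtain rfl := h.eq_zero_of_eq_vstar (mem_range.1 hm) hv
    exact ⟨i, hv, fun j hj => (h.eq_of_col_eq (Nat.two_pow_pos k) (Nat.two_pow_pos k)
      (congrArg col (hj.trans hv.symm))).1⟩

end IsColorfulCopy

namespace IsWWF

variable {X : Fin k → Finset V} {E : Fin k → Finset (V × V)} {u : Fin k → V}

lemma root_eq_of_vstar_mem (hW : IsWWF beats vstar k X E u) {i : Fin k} (hv : vstar ∈ X i) :
    u i = vstar := by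
  obtain ⟨harb, -, -, hdisj, -, -, hunique⟩ := hW
  obtain ⟨j, hj, -⟩ := hunique ⟨i, hv⟩
  obtain rfl : j = i := by_contra fun hji =>
    disjoint_left.1 (hdisj j i hji) (hj ▸ (harb j).root_mem) hv
  exact hj

theorem exists_isColorfulCopy (hW : IsWWF beats vstar k X E u)
    (hcol : Set.InjOn col (⋃ i, ↑(X i))) : ∃ G, IsColorfulCopy beats vstar col k G := by
  have hvroot : ∀ i, vstar ∈ X i → u i = vstar := fun _ => hW.root_eq_of_vstar_mem
  obtain ⟨harb, hbeats, hcard, hdisj, hroot, -, -⟩ := hW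
  choose G hGinj hX hE hu using fun i => (harb i).exists_eq_image_binomial_of_card (hcard i)
  have hmem : ∀ i, ∀ m < 2 ^ k, G i m ∈ X i := fun i m hm =>
    hX i ▸ mem_image_of_mem _ (mem_range.2 hm)
  refine ⟨G, ?_, fun i => ⟨hu i ▸ hroot i, fun a ha => ⟨?_, ?_⟩⟩⟩
  · rintro ⟨i, m⟩ ⟨j, m'⟩ he
    have he' : G i m = G j m' :=
      hcol (Set.mem_iUnion.2 ⟨i, hmem i m m.2⟩) (Set.mem_iUnion.2 ⟨j, hmem j m' m'.2⟩) he
    obtain rfl : i = j := by_contra fun hij =>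
      disjoint_left.1 (hdisj i j hij) (hmem i m m.2) (he' ▸ hmem j m' m'.2)
    simpa [Fin.ext_iff] using hGinj i (mem_range.2 m.2) (mem_range.2 m'.2) he'
  · exact hbeats i _ (hE i ▸ mem_image_of_mem _ ha)
  · rintro ⟨hv, -⟩
    obtain ⟨h0, hlt, -⟩ := mem_binomialArcs.1 ha
    have hu' : G i 0 = G i a.2 :=
      (hu i).symm.trans ((hvroot i (hv ▸ hmem i _ hlt)).trans hv.symm)
    exact h0 (hGinj i (mem_range.2 (Nat.two_pow_pos k)) (mem_range.2 hlt) hu').symm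

end IsWWF

end ColorfulCopy

lemma exists_eq_optionMap {α β : Type*} {φ : Option α → Option β} (hφ : Function.Injective φ)
    (hnone : φ none = none) : ∃ g : α → β, φ = Option.map g := by
  have hsome (a : α) : (φ (some a)).isSome :=
    Option.isSome_iff_ne_none.2 fun ha => Option.some_ne_none a (hφ (ha.trans hnone.symm))
  refine ⟨fun a => (φ (some a)).get (hsome a), funext fun a => ?_⟩
  cases a <;> simp [hnone]

lemma colD'_comp_optionMap_injective_iff {V α : Type*} {k : ℕ} {col : V → Fin (k * 2 ^ k)}
    {g : α → V} :
    Function.Injective (colD' k col ∘ Option.map g) ↔ Function.Injective (col ∘ g) := by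
  constructor
  · intro h a b he
    exact Option.some_injective _ (h (a₁ := some a) (a₂ := some b) (congrArg Fin.castSucc he))
  · rintro h (_ | a) (_ | b) he <;> simp only [Function.comp_apply, Option.map, colD'] at he
    · rfl
    · exact absurd he.symm (Fin.castSucc_ne_last _)
    · exact absurd he (Fin.castSucc_ne_last _)
    · exact congrArg some (h (Fin.castSucc_injective _ he))

lemma isColorfulCopy_iff {V : Type*} {beats : V → V → Prop} {vstar : V} {k : ℕ}
    {col : V → Fin (k * 2 ^ k)} {G : Fin k → ℕ → V} :
    IsColorfulCopy beats vstar col k G ↔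
      (∀ a b, arcF' k a b → beatsD' beats vstar (Option.map (fun p => G p.1 p.2) a)
        (Option.map (fun p => G p.1 p.2) b)) ∧
      Function.Injective (colD' k col ∘ Option.map fun p : Fin k × Fin (2 ^ k) => G p.1 p.2) := by
  rw [colD'_comp_optionMap_injective_iff, IsColorfulCopy]
  refine and_comm.trans (and_congr_left' ⟨fun h => ?_, fun h i => ⟨?_, fun a ha => ?_⟩⟩)
  · rintro (_ | ⟨i, m⟩) (_ | ⟨j, m'⟩) hab
    · exact hab.elim
    · show beatsD' beats vstar none (some (G j m'))
      rw [show (m' : ℕ) = 0 from hab]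
      exact (h j).1
    · exact hab.elim
    · obtain ⟨rfl, hm0, hpar⟩ := hab
      exact (h i).2 (m, m') (mem_binomialArcs.2 ⟨hm0, m'.2, hpar⟩)
  · exact h none (some (i, 0)) rfl
  · obtain ⟨h₁, h₂⟩ := lt_of_mem_binomialArcs ha
    obtain ⟨hm0, -, hpar⟩ := mem_binomialArcs.1 ha
    exact h (some (i, ⟨a.1, h₁⟩)) (some (i, ⟨a.2, h₂⟩)) ⟨rfl, hm0, hpar⟩

theorem stmt10_general {V : Type*} [Fintype V] (beats : V → V → Prop)
    (vstar : V)
    (k : ℕ)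
    (col : V → Fin (k * 2 ^ k))
    (hcolNin : Set.InjOn col ↑(Finset.univ.filter (fun u => beats u vstar)))
    (hcolSep : ∀ u, beats u vstar → ∀ v, ¬ beats v vstar → col u ≠ col v) :
    (∃ (X : Fin k → Finset V) (E : Fin k → Finset (V × V)) (u : Fin k → V),
        IsWWF beats vstar k X E u ∧ Set.InjOn col (⋃ i, ↑(X i))) ↔
      (∃ φ : Option (Fin k × Fin (2 ^ k)) → Option V,
        Function.Injective φ ∧
        φ none = none ∧
        (∀ a b, arcF' k a b → beatsD' beats vstar (φ a) (φ b)) ∧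
        Function.Injective (colD' k col ∘ φ)) := by
  constructor
  · rintro ⟨X, E, u, hW, hcol⟩
    obtain ⟨G, hG⟩ := hW.exists_isColorfulCopy hcol
    obtain ⟨harc, hinj⟩ := isColorfulCopy_iff.1 hG
    exact ⟨_, hinj.of_comp, rfl, harc, hinj⟩
  · rintro ⟨φ, hφ, hnone, harc, hinj⟩
    obtain ⟨g, rfl⟩ := exists_eq_optionMap hφ hnone
    let G : Fin k → ℕ → V := fun i m => g (i, ⟨m % 2 ^ k, Nat.mod_lt _ (Nat.two_pow_pos k)⟩)
    have hg : g = fun p => G p.1 p.2 := funext fun p => by simp [G, Nat.mod_eq_of_lt p.2.2]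
    rw [hg] at harc hinj
    have hG := isColorfulCopy_iff.2 ⟨harc, hinj⟩
    rw [coe_filter_univ] at hcolNin
    exact ⟨_, _, _, hG.isWWF (by simp) hcolNin hcolSep, hG.injOn_col⟩

/-- let `k = |N_in(vstar)|` with `k * 2 ^ k < n`, and let `col` be a coloring
of the tournament with `k * 2 ^ k` colors such that the vertices of `N_in(vstar)` get
pairwise distinct colors, different from the colors of all other vertices.  Then there is a
winning-witness forest of `(D, vstar)` whose vertices get pairwise distinct colors under
`col` iff `D'` contains a subgraph `H'` (the image of an injection `φ` of the vertices of
`F'` mapping arcs of `F'` to arcs of `D'`), all of whose vertices get pairwise distinct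
colors under `c' = colD'`, which is isomorphic to `F'` via an isomorphism mapping `f` to
`d` (i.e. `φ none = none`). -/
theorem stmt10 {V : Type*} [Fintype V] (beats : V → V → Prop)
    (hirr : ∀ v, ¬ beats v v)
    (htot : ∀ u v : V, u ≠ v → (beats u v ↔ ¬ beats v u))
    (vstar : V)
    (k : ℕ) (hk : k = (Finset.univ.filter (fun u => beats u vstar)).card)
    (hn : k * 2 ^ k < Fintype.card V)
    (col : V → Fin (k * 2 ^ k))
    (hcolNin : Set.InjOn col ↑(Finset.univ.filter (fun u => beats u vstar)))
    (hcolSep : ∀ u, beats u vstar → ∀ v, ¬ beats v vstar → col u ≠ col v) :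
    (∃ (X : Fin k → Finset V) (E : Fin k → Finset (V × V)) (u : Fin k → V),
        IsWWF beats vstar k X E u ∧ Set.InjOn col (⋃ i, ↑(X i))) ↔
      (∃ φ : Option (Fin k × Fin (2 ^ k)) → Option V,
        Function.Injective φ ∧
        φ none = none ∧
        (∀ a b, arcF' k a b → beatsD' beats vstar (φ a) (φ b)) ∧
        Function.Injective (colD' k col ∘ φ)) :=
  stmt10_general beats vstar k col hcolNin hcolSep
end
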